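/- arXiv:1009.2620 — 2 statements merged into one kernel-verified Lean document; each statement's English description precedes it below -/
import Mathlib

section
/- Let V = v₀…v_{n-1} be a cyclically reduced word of length n ≥ 1, let i, j ∈ {0,…,n-1} with i ≠ j, v_i ≠ v_j, and v̄_i ≠ v_{j-1} (indices mod n), and let m ≥ 1. Set U = V_i^m V_{i,j} (the cyclic rotation at i repeated m times, followed by the cyclic segment from i to j). Then the length of U satisfies m·n < ℓ(U) < (m+1)·n, and U is cyclically reduced. -/
/-- The word `v_i v_{i+1} … v_{i+len-1}` read off from the letter function `v`. -/
def seg {A : Type*} (v : ℕ → A) (i len : ℕ) : List A :=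
  (List.range len).map (fun t => v (i + t))

/-- Freely reduced: no letter is followed by its formal inverse. -/
def FRed {A : Type*} (bar : A → A) (w : List A) : Prop :=
  w.Chain' (fun x y => y ≠ bar x)

/-- Cyclically reduced: every rotation is freely reduced. -/
def CRed {A : Type*} (bar : A → A) (w : List A) : Prop :=
  ∀ r, FRed bar (w.rotate r)

/-- `p`-fold concatenation power of a word. -/
def pw {A : Type*} (w : List A) (m : ℕ) : List A := (List.replicate m w).flatten

/-- `w₂` is a cyclic rotation of `w₁`. -/
def IsRot {A : Type*} (w₁ w₂ : List A) : Prop := ∃ r, w₂ = w₁.rotate r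

/-- The cyclic class of `w` is not that of a proper power. -/
def Nonpower {A : Type*} (w : List A) : Prop :=
  ¬ ∃ (u : List A) (p : ℕ), 2 ≤ p ∧ IsRot (pw u p) w

/-!
Because `v` is `n`-periodic, `V_i^m V_{i,j}` is the single segment `v_i v_{i+1} … v_{i+mn+L-1}` of
length `mn + L`, where `L = (j - i) mod n` lies strictly between `0` and `n` since `i ≠ j`. Inside
the segment consecutive letters never cancel because `V` is cyclically reduced; the only new
adjacency is the wrap-around from the last letter `v_{j-1}` back to the first letter `v_i`, and
`v̄_i ≠ v_{j-1}` rules out cancellation there.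
-/

section

variable {A : Type*}

@[simp]
lemma seg_length (v : ℕ → A) (i len : ℕ) : (seg v i len).length = len := by
  simp [seg]

@[simp]
lemma seg_getElem (v : ℕ → A) (i len t : ℕ) (h : t < (seg v i len).length) :
    (seg v i len)[t] = v (i + t) := by
  simp [seg]

lemma seg_add (v : ℕ → A) (i a b : ℕ) :
    seg v i (a + b) = seg v i a ++ seg v (i + a) b := by
  simp only [seg, List.range_add, List.map_append, List.map_map]
  congr 1
  exact List.map_congr_left fun t _ => by simp [Nat.add_assoc]

lemma seg_add_mul {v : ℕ → A} {n : ℕ} (hper : Function.Periodic v n) (i k len : ℕ) :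
    seg v (i + k * n) len = seg v i len :=
  List.map_congr_left fun t _ => by
    rw [Nat.add_right_comm]
    exact hper.nat_mul k (i + t)

lemma pw_seg {v : ℕ → A} {n : ℕ} (hper : Function.Periodic v n) (i m : ℕ) :
    pw (seg v i n) m = seg v i (m * n) := by
  induction m with
  | zero => simp [pw, seg]
  | succ m ih =>
    rw [pw, List.replicate_succ, List.flatten_cons, ← pw, ih, Nat.succ_mul, Nat.add_comm,
      seg_add, ← Nat.one_mul n, seg_add_mul hper, Nat.one_mul]

lemma cRed_of_forall_getElem_succ_mod {bar : A → A} {w : List A}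
    (h : ∀ t (ht : t < w.length),
      w[(t + 1) % w.length]'(Nat.mod_lt _ (by omega)) ≠ bar w[t]) :
    CRed bar w := by
  intro r
  refine List.isChain_iff_getElem.mpr fun t ht => ?_
  simp only [List.length_rotate] at ht
  simp only [List.getElem_rotate]
  convert h ((t + r) % w.length) (Nat.mod_lt _ (by omega)) using 2
  rw [Nat.mod_add_mod, Nat.add_right_comm]

lemma cRed_seg {bar : A → A} {v : ℕ → A} (hred : ∀ t, v (t + 1) ≠ bar (v t))
    {i N : ℕ} (hwrap : v i ≠ bar (v (i + N - 1))) :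
    CRed bar (seg v i N) := by
  refine cRed_of_forall_getElem_succ_mod fun t ht => ?_
  simp only [seg_length] at ht ⊢
  simp only [seg_getElem]
  rcases Nat.lt_or_ge (t + 1) N with hlt | hge
  · rw [Nat.mod_eq_of_lt hlt, ← Nat.add_assoc]
    exact hred (i + t)
  · rw [show t + 1 = N by omega, Nat.mod_self, Nat.add_zero, show i + t = i + N - 1 by omega]
    exact hwrap

lemma add_sub_mod_eq_or {i j n : ℕ} (hi : i < n) (hj : j < n) :
    i + (j + n - i) % n = j ∨ i + (j + n - i) % n = j + n := by
  rcases le_or_gt i j with hle | hlt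
  · left
    rw [show j + n - i = (j - i) + n by omega, Nat.add_mod_right, Nat.mod_eq_of_lt (by omega)]
    omega
  · right
    rw [Nat.mod_eq_of_lt (by omega)]
    omega

end

theorem stmt2_general {A : Type*} (bar : A → A) (hbar : ∀ x, bar (bar x) = x)
    (v : ℕ → A) (n : ℕ) (hn : 1 ≤ n)
    (hper : ∀ t, v (t + n) = v t)
    (hred : ∀ t, v (t + 1) ≠ bar (v t))
    (i j : ℕ) (hi : i < n) (hj : j < n) (hij : i ≠ j)
    (h2 : bar (v i) ≠ v (j + n - 1))
    (m : ℕ) :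
    m * n < (pw (seg v i n) m ++ seg v i ((j + n - i) % n)).length ∧
    (pw (seg v i n) m ++ seg v i ((j + n - i) % n)).length < (m + 1) * n ∧
    CRed bar (pw (seg v i n) m ++ seg v i ((j + n - i) % n)) := by
  replace hper : Function.Periodic v n := hper
  set L := (j + n - i) % n
  have hLn : L < n := Nat.mod_lt _ hn
  have hend : i + L = j ∨ i + L = j + n := add_sub_mod_eq_or hi hj
  have hLpos : 0 < L := by omega
  have hU : pw (seg v i n) m ++ seg v i L = seg v i (m * n + L) := by
    rw [pw_seg hper, seg_add, seg_add_mul hper]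
  have hmn : Function.Periodic v (m * n) := hper.nat_mul m
  have hlast : v (i + (m * n + L) - 1) = v (j + n - 1) := by
    rw [show i + (m * n + L) - 1 = (i + L - 1) + m * n by omega, hmn]
    rcases hend with h | h
    · rw [h, show j + n - 1 = (j - 1) + n by omega, hper]
    · rw [h]
  rw [hU, seg_length, Nat.add_one_mul]
  refine ⟨by omega, by omega, cRed_seg hred ?_⟩
  rw [hlast]
  exact fun h => h2 (by rw [h, hbar])

/-- With `i ≠ j`, `v_i ≠ v_j`, `v̄_i ≠ v_{j-1}` and `m ≥ 1`,
the word `U = V_i^m V_{i,j}` satisfies `m·n < ℓ(U) < (m+1)·n` and is cyclically reduced. -/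
theorem stmt2 {A : Type*} (bar : A → A) (hbar : ∀ x, bar (bar x) = x)
    (v : ℕ → A) (n : ℕ) (hn : 1 ≤ n)
    (hper : ∀ t, v (t + n) = v t)
    (hred : ∀ t, v (t + 1) ≠ bar (v t))
    (i j : ℕ) (hi : i < n) (hj : j < n) (hij : i ≠ j)
    (h1 : v i ≠ v j) (h2 : bar (v i) ≠ v (j + n - 1))
    (m : ℕ) (hm : 1 ≤ m) :
    m * n < (pw (seg v i n) m ++ seg v i ((j + n - i) % n)).length ∧
    (pw (seg v i n) m ++ seg v i ((j + n - i) % n)).length < (m + 1) * n ∧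
    CRed bar (pw (seg v i n) m ++ seg v i ((j + n - i) % n)) :=
  stmt2_general bar hbar v n hn hper hred i j hi hj hij h2 m
end

section
/- Let V = v₀…v_{n-1} be a cyclically reduced word of length n ≥ 2, let i, j be indices with i ≠ j, v_i ≠ v_j, and v̄_i ≠ v_{j-1}, and let m ≥ 2. If U = V_i^m V_{i,j} and W is any cyclic rotation U_r of U with 0 < r ≤ ℓ(U) − n satisfying W = V_k^m V_{k,h} for some indices k, h with k ≠ h, then v_k = v_h. Consequently, if additionally v_k ≠ v_h is required (linked-pair condition), no such rotation with 0 < r ≤ ℓ(U) − n exists. -/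
open Function

/-!
The word `U = V_i^m V_{i,j}` is the segment of length `L = m n + ℓ(V_{i,j})` of the `n`-periodic
sequence `v`, starting at `i`. If its rotation by `0 < r ≤ L - n` is again a segment `seg v k L`,
then the first `n` letters of that segment force `v (k + t) = v (i + r + t)` for every `t`, by
periodicity. Reading off the letter at position `L - r`, where the rotation wraps around to the
first letter `v i` of `U`, gives `v i = v (i + L) = v j`, contradicting `v i ≠ v j`. So no such
rotation exists, and both claims hold.
-/

section Seg

variable {A : Type*} (v : ℕ → A)

@[simp]
lemma length_seg (i L : ℕ) : (seg v i L).length = L := by simp [seg]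

@[simp]
lemma getElem_seg {i L t : ℕ} (ht : t < (seg v i L).length) : (seg v i L)[t] = v (i + t) := by
  simp [seg]

lemma seg_append_seg (i a b : ℕ) : seg v i a ++ seg v (i + a) b = seg v i (a + b) := by
  simp [seg, List.range_add, Function.comp_def, Nat.add_assoc]

end Seg

namespace Function.Periodic

variable {A : Type*} {v : ℕ → A} {n : ℕ}

lemma seg_add_self (hv : Periodic v n) (i L : ℕ) : seg v (i + n) L = seg v i L := by
  unfold seg
  exact List.map_congr_left fun t _ => by rw [Nat.add_right_comm, hv]

lemma pw_seg_append_seg (hv : Periodic v n) (i s m : ℕ) :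
    pw (seg v i n) m ++ seg v i s = seg v i (m * n + s) := by
  induction m with
  | zero => simp [pw]
  | succ m ih =>
    rw [pw, List.replicate_succ, List.flatten_cons, ← pw, List.append_assoc, ih,
      ← hv.seg_add_self i (m * n + s), seg_append_seg, Nat.succ_mul, Nat.add_right_comm,
      Nat.add_comm n]

/-- The letter following `V_{i,j}` in the periodic sequence is `v_j`. -/
lemma apply_add_cyclic_dist (hv : Periodic v n) {i j : ℕ} (hij : i ≤ j + n) :
    v (i + (j + n - i) % n) = v j := by
  rw [← hv.map_mod_nat (i + _), Nat.add_mod_mod, Nat.add_sub_cancel' hij, hv.map_mod_nat, hv]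

lemma apply_add_eq_of_rotate_seg_eq (hn : 0 < n) (hv : Periodic v n) {i k r L : ℕ}
    (hrL : r + n ≤ L) (h : (seg v i L).rotate r = seg v k L) (t : ℕ) :
    v (k + t) = v (i + r + t) := by
  have hagree : ∀ s < n, v (k + s) = v (i + r + s) := by
    intro s hs
    have e := List.getElem_of_eq h (i := s) (by rw [List.length_rotate, length_seg]; omega)
    rw [List.getElem_rotate] at e
    simp only [length_seg, getElem_seg, Nat.mod_eq_of_lt (show s + r < L by omega)] at e
    rw [← e, Nat.add_assoc, Nat.add_comm r]
  rw [← (hv.const_add k).map_mod_nat, ← (hv.const_add (i + r)).map_mod_nat]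
  exact hagree _ (Nat.mod_lt _ hn)

/-- The rotation wraps around at position `L - r`, where it reads the first letter `v i`. -/
lemma apply_add_length_eq_of_rotate_seg_eq (hn : 0 < n) (hv : Periodic v n) {i k r L L' : ℕ}
    (hr : 0 < r) (hrL : r + n ≤ L) (h : (seg v i L).rotate r = seg v k L') :
    v (i + L) = v i := by
  obtain rfl : L = L' := by simpa using congrArg List.length h
  have e := List.getElem_of_eq h (i := L - r) (by rw [List.length_rotate, length_seg]; omega)
  rw [List.getElem_rotate] at e
  simp only [length_seg, getElem_seg, Nat.sub_add_cancel (show r ≤ L by omega), Nat.mod_self] at e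
  calc v (i + L) = v (i + r + (L - r)) := by congr 1; omega
    _ = v (k + (L - r)) := (hv.apply_add_eq_of_rotate_seg_eq hn hrL h _).symm
    _ = v i := e.symm

end Function.Periodic

theorem stmt7_general {A : Type*}
    (v : ℕ → A) (n : ℕ)
    (hper : ∀ t, v (t + n) = v t)
    (i j : ℕ) (hi : i < n)
    (h1 : v i ≠ v j)
    (m : ℕ) :
    (∀ r k h, 0 < r →
        r ≤ (pw (seg v i n) m ++ seg v i ((j + n - i) % n)).length - n →
        k < n → h < n → k ≠ h →
        (pw (seg v i n) m ++ seg v i ((j + n - i) % n)).rotate r =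
          pw (seg v k n) m ++ seg v k ((h + n - k) % n) →
        v k = v h) ∧
    (∀ r k h, 0 < r →
        r ≤ (pw (seg v i n) m ++ seg v i ((j + n - i) % n)).length - n →
        k < n → h < n → k ≠ h → v k ≠ v h →
        (pw (seg v i n) m ++ seg v i ((j + n - i) % n)).rotate r ≠
          pw (seg v k n) m ++ seg v k ((h + n - k) % n)) := by
  have hv : Periodic v n := hper
  have no_rotation : ∀ r k h, 0 < r →
      r ≤ (pw (seg v i n) m ++ seg v i ((j + n - i) % n)).length - n →
      (pw (seg v i n) m ++ seg v i ((j + n - i) % n)).rotate r ≠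
        pw (seg v k n) m ++ seg v k ((h + n - k) % n) := by
    intro r k h hr hrL heq
    rw [hv.pw_seg_append_seg, hv.pw_seg_append_seg] at heq
    rw [hv.pw_seg_append_seg, length_seg] at hrL
    refine h1 ?_
    calc v i = v (i + (m * n + (j + n - i) % n)) :=
          (hv.apply_add_length_eq_of_rotate_seg_eq (by omega) hr (by omega) heq).symm
      _ = v (i + (j + n - i) % n) := by
          rw [Nat.add_left_comm, Nat.add_comm]
          exact hv.nsmul m _
      _ = v j := hv.apply_add_cyclic_dist (by omega)
  exact ⟨fun r k h hr hrL _ _ _ heq => (no_rotation r k h hr hrL heq).elim,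
    fun r k h hr hrL _ _ _ _ => no_rotation r k h hr hrL⟩

/-- For `U = V_i^m V_{i,j}` with `m ≥ 2`, if a rotation `U.rotate r` with
`0 < r ≤ ℓ(U) − n` equals some `V_k^m V_{k,h}` with `k ≠ h`, then `v_k = v_h`; hence no
such rotation exists when additionally `v_k ≠ v_h` is required. -/
theorem stmt7 {A : Type*} (bar : A → A) (hbar : ∀ x, bar (bar x) = x)
    (v : ℕ → A) (n : ℕ) (hn : 2 ≤ n)
    (hper : ∀ t, v (t + n) = v t)
    (hred : ∀ t, v (t + 1) ≠ bar (v t))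
    (i j : ℕ) (hi : i < n) (hj : j < n) (hij : i ≠ j)
    (h1 : v i ≠ v j) (h2 : bar (v i) ≠ v (j + n - 1))
    (m : ℕ) (hm : 2 ≤ m) :
    (∀ r k h, 0 < r →
        r ≤ (pw (seg v i n) m ++ seg v i ((j + n - i) % n)).length - n →
        k < n → h < n → k ≠ h →
        (pw (seg v i n) m ++ seg v i ((j + n - i) % n)).rotate r =
          pw (seg v k n) m ++ seg v k ((h + n - k) % n) →
        v k = v h) ∧
    (∀ r k h, 0 < r →
        r ≤ (pw (seg v i n) m ++ seg v i ((j + n - i) % n)).length - n →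
        k < n → h < n → k ≠ h → v k ≠ v h →
        (pw (seg v i n) m ++ seg v i ((j + n - i) % n)).rotate r ≠
          pw (seg v k n) m ++ seg v k ((h + n - k) % n)) :=
  stmt7_general v n hper i j hi h1 m
end
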